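/- arXiv:2204.11214 — 2 statements merged into one kernel-verified Lean document; each statement's English description precedes it below -/
import Mathlib

section
/- Let H be a group, U an open subgroup of H that is a uniform pro-p group, and 0 → A → B → C → 0 an exact sequence of O_L[U]-modules such that p^a annihilates A and U acts trivially on both A and C. Then H possesses an open subgroup acting trivially on B; in fact the subgroup U_a = {h^{p^a} : h ∈ U} acts trivially on B. -/
section UnipotentAction

variable {G M : Type*} [Monoid G] [AddCommGroup M] [DistribMulAction G M]

theorem pow_smul_eq_add_nsmul_smul_sub {g : G} {v : M} (hfix : g • (g • v - v) = g • v - v)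
    (n : ℕ) : g ^ n • v = v + n • (g • v - v) := by
  induction n with
  | zero => simp
  | succ n ih =>
    calc g ^ (n + 1) • v = g • (v + n • (g • v - v)) := by rw [pow_succ', mul_smul, ih]
      _ = g • v + n • (g • (g • v - v)) := by rw [smul_add, smul_comm]
      _ = v + (n + 1) • (g • v - v) := by rw [hfix, succ_nsmul]; abel

theorem pow_smul_eq_self_of_nsmul_smul_sub_eq_zero {g : G} {v : M} {n : ℕ}
    (hfix : g • (g • v - v) = g • v - v) (hn : n • (g • v - v) = 0) : g ^ n • v = v := by
  rw [pow_smul_eq_add_nsmul_smul_sub hfix, hn, add_zero]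

end UnipotentAction

theorem stmt_0_general (p a : ℕ)
    (H : Type*) [Group H] [TopologicalSpace H]
    (U Ua : Subgroup H)
    (hUa : (Ua : Set H) = (fun h : H => h ^ p ^ a) '' (U : Set H))
    (hUaopen : IsOpen (Ua : Set H))
    (R : Type*) [CommRing R]
    (B : Type*) [AddCommGroup B] [Module R B] [DistribMulAction H B]
    (A : Submodule R B)
    (hAtriv : ∀ h ∈ U, ∀ x ∈ A, h • x = x)
    (hCtriv : ∀ h ∈ U, ∀ v : B, h • v - v ∈ A)
    (hkill : ∀ x ∈ A, (p ^ a : ℕ) • x = 0) :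
    (∀ h ∈ U, ∀ v : B, (h ^ p ^ a) • v = v) ∧
      (∃ V : Subgroup H, IsOpen (V : Set H) ∧ ∀ g ∈ V, ∀ v : B, g • v = v) := by
  have hpow : ∀ h ∈ U, ∀ v : B, (h ^ p ^ a) • v = v := fun h hh v =>
    pow_smul_eq_self_of_nsmul_smul_sub_eq_zero (hAtriv h hh _ (hCtriv h hh v))
      (hkill _ (hCtriv h hh v))
  refine ⟨hpow, Ua, hUaopen, fun g hg v => ?_⟩
  obtain ⟨h, hh, rfl⟩ : g ∈ (fun h : H => h ^ p ^ a) '' (U : Set H) := hUa ▸ hg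
  exact hpow h hh v

/-- Let `H` be a (p-adic Lie) group, `U` an open subgroup which is a uniform
pro-`p` group (encoded by the subgroup `Ua` whose underlying set is the set of `p^a`-th powers
of elements of `U`, which is open), and `0 → A → B → C → 0` an exact sequence of `O_L[U]`-modules
(encoded by the submodule `A` of `B`, the quotient being `C`) such that `p^a` kills `A` and `U`
acts trivially on `A` and on `C = B/A`. Then `H` has an open subgroup acting trivially on `B`;
in fact `U_a = {h^{p^a} : h ∈ U}` acts trivially on `B`. -/
theorem stmt_0 (p a : ℕ) (hp : p.Prime)
    (H : Type*) [Group H] [TopologicalSpace H] [IsTopologicalGroup H]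
    (U Ua : Subgroup H) (hUopen : IsOpen (U : Set H))
    (hUa : (Ua : Set H) = (fun h : H => h ^ p ^ a) '' (U : Set H))
    (hUaopen : IsOpen (Ua : Set H))
    (R : Type*) [CommRing R]
    (B : Type*) [AddCommGroup B] [Module R B] [DistribMulAction H B] [SMulCommClass H R B]
    (A : Submodule R B)
    (hAtriv : ∀ h ∈ U, ∀ x ∈ A, h • x = x)
    (hCtriv : ∀ h ∈ U, ∀ v : B, h • v - v ∈ A)
    (hkill : ∀ x ∈ A, (p ^ a : ℕ) • x = 0) :
    (∀ h ∈ U, ∀ v : B, (h ^ p ^ a) • v = v) ∧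
      (∃ V : Subgroup H, IsOpen (V : Set H) ∧ ∀ g ∈ V, ∀ v : B, g • v = v) :=
  stmt_0_general p a H U Ua hUa hUaopen R B A hAtriv hCtriv hkill
end

section
/- Let K be a compact p-adic Lie group acting continuously on a projective system of affinoid perfectoid spaces, such that the connected-components maps identify π_0(U_s) with K/Γ_s for closed subgroups Γ_s ⊂ Γ_{s+1} of K, and consider the projective system {Hom_cont(K/Γ_s, F_p)}_s. Then this projective system is eventually constant (in particular Mittag-Leffler); more precisely, since every compact p-adic Lie group K contains an open subgroup with the ascending chain condition on closed subgroups, the increasing chain Γ_s ⊂ Γ_{s+1} ⊂ ... of closed subgroups of K is stationary. -/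
/-!
The closed subgroups of `K` contained in the open subgroup `K'` satisfy the ascending chain
condition, and `K'` has finite index because `K` is compact. Nested subgroups `A ≤ B` with the
same intersection with `K'` and the same image in the finite set `K ⧸ K'` coincide; along an
increasing chain of closed subgroups both invariants stabilise, hence so does the chain.
-/

noncomputable instance (n : ℕ) : TopologicalSpace (ZMod n) := ⊥

namespace Subgroup

variable {G : Type*} [Group G]

theorem eq_of_le_of_inf_le_of_image_mk_subset {H A B : Subgroup G} (hAB : A ≤ B)
    (hinf : B ⊓ H ≤ A)
    (himg : (QuotientGroup.mk : G → G ⧸ H) '' (B : Set G) ⊆ QuotientGroup.mk '' (A : Set G)) :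
    A = B := by
  refine le_antisymm hAB fun g hg => ?_
  obtain ⟨γ, hγ, hγg⟩ := himg ⟨g, hg, rfl⟩
  have hquot : γ⁻¹ * g ∈ B ⊓ H :=
    ⟨B.mul_mem (B.inv_mem (hAB hγ)) hg, QuotientGroup.eq.mp hγg⟩
  simpa using A.mul_mem hγ (hinf hquot)

theorem exists_forall_ge_eq_of_inf_of_image_mk (H : Subgroup G) {Γ : ℕ → Subgroup G}
    (hΓ : Monotone Γ) (hinf : ∃ N, ∀ n ≥ N, Γ n ⊓ H = Γ N ⊓ H)
    (himg : ∃ N, ∀ n ≥ N,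
      (QuotientGroup.mk : G → G ⧸ H) '' (Γ n : Set G) = QuotientGroup.mk '' (Γ N : Set G)) :
    ∃ N, ∀ n ≥ N, Γ n = Γ N := by
  obtain ⟨N₁, hN₁⟩ := hinf
  obtain ⟨N₂, hN₂⟩ := himg
  refine ⟨max N₁ N₂, fun n hn =>
    (eq_of_le_of_inf_le_of_image_mk_subset (H := H) (hΓ hn) ?_ ?_).symm⟩
  · rw [hN₁ n (le_of_max_le_left hn), ← hN₁ (max N₁ N₂) (le_max_left _ _)]
    exact inf_le_left
  · rw [hN₂ n (le_of_max_le_right hn), hN₂ (max N₁ N₂) (le_max_right _ _)]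

variable [TopologicalSpace G] [SeparatelyContinuousMul G] [CompactSpace G]

theorem exists_forall_ge_eq_of_isOpen_of_acc {H : Subgroup G} (hH : IsOpen (H : Set G))
    (hacc : ∀ D : ℕ → Subgroup G, (∀ n, IsClosed (D n : Set G)) → (∀ n, D n ≤ H) →
      Monotone D → ∃ N, ∀ n ≥ N, D n = D N)
    {Γ : ℕ → Subgroup G} (hclosed : ∀ n, IsClosed (Γ n : Set G)) (hΓ : Monotone Γ) :
    ∃ N, ∀ n ≥ N, Γ n = Γ N := by
  refine H.exists_forall_ge_eq_of_inf_of_image_mk hΓ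
    (hacc _ (fun n => (hclosed n).inter (H.isClosed_of_isOpen hH)) (fun _ => inf_le_right)
      fun _ _ hmn => inf_le_inf_right _ (hΓ hmn)) ?_
  have : Finite (G ⧸ H) := H.quotient_finite_of_isOpen hH
  obtain ⟨N, hN⟩ := WellFoundedGT.monotone_chain_condition
    ⟨fun n => (QuotientGroup.mk : G → G ⧸ H) '' (Γ n : Set G),
      fun _ _ hmn => Set.image_mono (hΓ hmn)⟩
  exact ⟨N, fun n hn => (hN n hn).symm⟩

end Subgroup

theorem stmt_15_general (p : ℕ)
    {K : Type} [Group K] [TopologicalSpace K] [IsTopologicalGroup K] [CompactSpace K]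
    (hLie : ∃ K' : Subgroup K, IsOpen (K' : Set K) ∧
      ∀ D : ℕ → Subgroup K, (∀ n, IsClosed (D n : Set K)) → (∀ n, D n ≤ K') → Monotone D →
        ∃ N, ∀ n ≥ N, D n = D N)
    (Γ : ℕ → Subgroup K)
    (hclosed : ∀ s, IsClosed (Γ s : Set K)) (hmono : Monotone Γ) :
    (∃ N, ∀ s ≥ N, Γ s = Γ N) ∧
      (∃ N, ∀ s ≥ N,
        {f : K →* Multiplicative (ZMod p) | Continuous f ∧ ∀ γ ∈ Γ s, f γ = 1} =
          {f : K →* Multiplicative (ZMod p) | Continuous f ∧ ∀ γ ∈ Γ N, f γ = 1}) := by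
  obtain ⟨K', hK'open, hK'acc⟩ := hLie
  obtain ⟨N, hN⟩ := Subgroup.exists_forall_ge_eq_of_isOpen_of_acc hK'open hK'acc hclosed hmono
  exact ⟨⟨N, hN⟩, N, fun s hs => by rw [hN s hs]⟩

/-- Let `K` be a compact p-adic Lie group (the Lie-theoretic input, due to
[Glo, prop. 2.4], is encoded by the hypothesis `hLie`: `K` contains an open subgroup `K'`
such that every increasing sequence of closed subgroups of `K'` is stationary).  Let
`Γ_s ⊆ Γ_{s+1} ⊆ ⋯` be an increasing sequence of closed subgroups of `K`.  Then the chain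
`(Γ_s)` is stationary, and consequently the projective system
`{Hom_cont(K/Γ_s, 𝔽_p)}_s` — realized as the sets of continuous homomorphisms `K → 𝔽_p`
vanishing on `Γ_s`, with transition maps the inclusions — is eventually constant (in
particular Mittag-Leffler). -/
theorem stmt_15 (p : ℕ) [Fact p.Prime]
    {K : Type} [Group K] [TopologicalSpace K] [IsTopologicalGroup K] [CompactSpace K]
    (hLie : ∃ K' : Subgroup K, IsOpen (K' : Set K) ∧
      ∀ D : ℕ → Subgroup K, (∀ n, IsClosed (D n : Set K)) → (∀ n, D n ≤ K') → Monotone D →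
        ∃ N, ∀ n ≥ N, D n = D N)
    (Γ : ℕ → Subgroup K)
    (hclosed : ∀ s, IsClosed (Γ s : Set K)) (hmono : Monotone Γ) :
    (∃ N, ∀ s ≥ N, Γ s = Γ N) ∧
      (∃ N, ∀ s ≥ N,
        {f : K →* Multiplicative (ZMod p) | Continuous f ∧ ∀ γ ∈ Γ s, f γ = 1} =
          {f : K →* Multiplicative (ZMod p) | Continuous f ∧ ∀ γ ∈ Γ N, f γ = 1}) :=
  stmt_15_general p hLie Γ hclosed hmono
end
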